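/- arXiv:2510.18655 — 2 statements merged into one kernel-verified Lean document; each statement's English description precedes it below -/
import Mathlib

section
/- At γ₀ = √(1+√7), the third derivative of λ is strictly positive and the fourth derivative of λ is strictly negative, where λ(x) = x·√((2+x²)/(1+x²)). -/
noncomputable def lam (x : ℝ) : ℝ := x * Real.sqrt ((2 + x ^ 2) / (1 + x ^ 2))

noncomputable def gamma0 : ℝ := Real.sqrt (1 + Real.sqrt 7)

/-!
With `s x = √((2 + x²)/(1 + x²))` and `D = (1 + x²)(2 + x²)` one has `s' = -x s / D`, so by
induction `λ⁽ⁿ⁾ = Pₙ s / Dⁿ` for polynomials `Pₙ` with `P₀ = X` and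
`Pₙ₊₁ = Pₙ' D - X Pₙ - n Pₙ D'`. The signs of `λ'''(γ₀)` and `λ''''(γ₀)` are those of `P₃(γ₀)` and
`P₄(γ₀)`. Since `P₂ = X (X⁴ - 2X² - 6)`, the number `t = γ₀² = 1 + √7` is the positive root of
`t² - 2t - 6`; reducing modulo it gives `P₃(γ₀) = 192 t + 312 > 0` and
`P₄(γ₀) = -γ₀ (8208 t + 13512) < 0`.
-/

open Polynomial

noncomputable def sqrtRatio (x : ℝ) : ℝ := Real.sqrt ((2 + x ^ 2) / (1 + x ^ 2))

noncomputable def lamDenom : ℝ[X] := (1 + X ^ 2) * (2 + X ^ 2)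

noncomputable def lamNum : ℕ → ℝ[X]
  | 0 => X
  | n + 1 => derivative (lamNum n) * lamDenom - X * lamNum n
      - (n : ℝ[X]) * lamNum n * derivative lamDenom

lemma sqrtRatio_pos (x : ℝ) : 0 < sqrtRatio x := Real.sqrt_pos.mpr (by positivity)

lemma lamDenom_eval (x : ℝ) : lamDenom.eval x = (1 + x ^ 2) * (2 + x ^ 2) := by
  simp [lamDenom]

lemma lamDenom_eval_pos (x : ℝ) : 0 < lamDenom.eval x := by
  rw [lamDenom_eval]; positivity

lemma hasDerivAt_sqrtRatio (x : ℝ) :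
    HasDerivAt sqrtRatio (-x / lamDenom.eval x * sqrtRatio x) x := by
  have h1 : (0 : ℝ) < 1 + x ^ 2 := by positivity
  have hq : HasDerivAt (fun y : ℝ => (2 + y ^ 2) / (1 + y ^ 2))
      ((2 * x * (1 + x ^ 2) - (2 + x ^ 2) * (2 * x)) / (1 + x ^ 2) ^ 2) x := by
    have hsq : HasDerivAt (fun y : ℝ => y ^ 2) (2 * x) x := by simpa using hasDerivAt_pow 2 x
    exact (hsq.const_add 2).div (hsq.const_add 1) h1.ne'
  refine (hq.sqrt (by positivity)).congr_deriv ?_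
  have hs := sqrtRatio_pos x
  have hs2 : sqrtRatio x ^ 2 * (1 + x ^ 2) = 2 + x ^ 2 := by
    rw [sqrtRatio, Real.sq_sqrt (by positivity)]; field_simp
  rw [lamDenom_eval, show √((2 + x ^ 2) / (1 + x ^ 2)) = sqrtRatio x from rfl]
  field_simp
  linear_combination x * hs2

lemma hasDerivAt_eval_mul_sqrtRatio_div (P : ℝ[X]) (n : ℕ) (x : ℝ) :
    HasDerivAt (fun y => P.eval y * sqrtRatio y / lamDenom.eval y ^ n)
      ((derivative P * lamDenom - X * P - (n : ℝ[X]) * P * derivative lamDenom).eval x * sqrtRatio x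
        / lamDenom.eval x ^ (n + 1)) x := by
  have hD := lamDenom_eval_pos x
  refine (((P.hasDerivAt x).mul (hasDerivAt_sqrtRatio x)).div
    ((lamDenom.hasDerivAt x).fun_pow n) (pow_pos hD n).ne').congr_deriv ?_
  simp only [eval_sub, eval_mul, eval_X, eval_natCast]
  rcases n with _ | n <;>
    simp only [Nat.cast_zero, Nat.cast_succ, Nat.add_sub_cancel, pow_zero, pow_succ,
      Pi.mul_apply] <;>
    field_simp <;> ring

lemma iteratedDeriv_lam (n : ℕ) :
    iteratedDeriv n lam = fun x => (lamNum n).eval x * sqrtRatio x / lamDenom.eval x ^ n := by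
  induction n with
  | zero => ext x; simp [lamNum, lam, sqrtRatio]
  | succ n ih =>
    ext x
    rw [iteratedDeriv_succ, ih]
    exact (hasDerivAt_eval_mul_sqrtRatio_div (lamNum n) n x).deriv

lemma lamNum_three_eval (x : ℝ) :
    (lamNum 3).eval x = -3 * x ^ 8 + 12 * x ^ 6 + 60 * x ^ 4 + 48 * x ^ 2 - 12 := by
  simp only [lamNum, lamDenom, derivative_mul, derivative_add, derivative_sub, derivative_X,
    derivative_X_pow, derivative_one, derivative_ofNat, derivative_C,
    derivative_zero, eval_mul, eval_add, eval_sub, eval_pow, eval_X, eval_one, eval_ofNat,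
    eval_C, eval_zero, Nat.cast_ofNat, Nat.cast_one, Nat.cast_zero]
  ring

lemma lamNum_four_eval (x : ℝ) :
    (lamNum 4).eval x = x * (12 * x ^ 10 - 87 * x ^ 8 - 540 * x ^ 6 - 756 * x ^ 4 + 420) := by
  simp only [lamNum, lamDenom, derivative_mul, derivative_add, derivative_sub, derivative_X,
    derivative_X_pow, derivative_one, derivative_ofNat, derivative_C,
    derivative_zero, eval_mul, eval_add, eval_sub, eval_pow, eval_X, eval_one, eval_ofNat,
    eval_C, eval_zero, Nat.cast_ofNat, Nat.cast_one, Nat.cast_zero]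
  ring

lemma iteratedDeriv_lam_pos {n : ℕ} {x : ℝ} (h : 0 < (lamNum n).eval x) :
    0 < iteratedDeriv n lam x := by
  rw [iteratedDeriv_lam]
  exact div_pos (mul_pos h (sqrtRatio_pos x)) (pow_pos (lamDenom_eval_pos x) n)

lemma iteratedDeriv_lam_neg {n : ℕ} {x : ℝ} (h : (lamNum n).eval x < 0) :
    iteratedDeriv n lam x < 0 := by
  rw [iteratedDeriv_lam]
  exact div_neg_of_neg_of_pos (mul_neg_of_neg_of_pos h (sqrtRatio_pos x))
    (pow_pos (lamDenom_eval_pos x) n)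

lemma gamma0_pos : 0 < gamma0 := Real.sqrt_pos.mpr (by positivity)

lemma gamma0_sq_sq : (gamma0 ^ 2) ^ 2 = 2 * gamma0 ^ 2 + 6 := by
  have h7 : √7 ^ 2 = 7 := Real.sq_sqrt (by norm_num)
  rw [gamma0, Real.sq_sqrt (by positivity)]
  linear_combination h7

theorem stmt_6 :
    0 < iteratedDeriv 3 lam gamma0 ∧ iteratedDeriv 4 lam gamma0 < 0 := by
  have ht := gamma0_sq_sq
  have h3 : (lamNum 3).eval gamma0 = 192 * gamma0 ^ 2 + 312 := by
    rw [lamNum_three_eval]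
    linear_combination (-3 * gamma0 ^ 4 + 6 * gamma0 ^ 2 + 54) * ht
  have h4 : (lamNum 4).eval gamma0 = -(gamma0 * (8208 * gamma0 ^ 2 + 13512)) := by
    rw [lamNum_four_eval]
    linear_combination gamma0 * (12 * gamma0 ^ 6 - 63 * gamma0 ^ 4 - 594 * gamma0 ^ 2 - 2322) * ht
  refine ⟨iteratedDeriv_lam_pos ?_, iteratedDeriv_lam_neg ?_⟩
  · rw [h3]; positivity
  · rw [h4]; exact neg_neg_of_pos (mul_pos gamma0_pos (by positivity))
end

section
/- Let π be the reflection map near γ₀ satisfying λ'(x) = λ'(π(x)), π(γ₀) = γ₀. Then π''(γ₀) = -2·λ⁗(γ₀)/(3·λ'''(γ₀)), where λ(x) = x·√((2+x²)/(1+x²)) and γ₀ = √(1+√7). -/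
open Real Filter Topology

noncomputable def sA (x : ℝ) : ℝ := Real.sqrt (2 + x ^ 2)
noncomputable def sB (x : ℝ) : ℝ := Real.sqrt (1 + x ^ 2)
noncomputable def E1 (x : ℝ) : ℝ := (x ^ 4 + 2 * x ^ 2 + 2) / (sA x * sB x * (1 + x ^ 2))
noncomputable def E2 (x : ℝ) : ℝ :=
    (x ^ 5 - 2 * x ^ 3 - 6 * x) / (sA x * sB x * (2 + x ^ 2) * (1 + x ^ 2) ^ 2)
noncomputable def E3 (x : ℝ) : ℝ :=
    ((5 * x ^ 4 - 6 * x ^ 2 - 6) * (2 + x ^ 2) * (1 + x ^ 2)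
      - (x ^ 5 - 2 * x ^ 3 - 6 * x) * x * (8 * x ^ 2 + 13)) /
    (sA x * sB x * (2 + x ^ 2) ^ 2 * (1 + x ^ 2) ^ 3)

lemma one_le_infty : (1 : WithTop ℕ∞) ≤ (((⊤:ℕ∞)) : WithTop ℕ∞) := by exact_mod_cast le_top

lemma sA_pos (x : ℝ) : 0 < sA x := Real.sqrt_pos.2 (by positivity)
lemma sB_pos (x : ℝ) : 0 < sB x := Real.sqrt_pos.2 (by positivity)
lemma sA_sq (x : ℝ) : sA x ^ 2 = 2 + x ^ 2 := Real.sq_sqrt (by positivity)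
lemma sB_sq (x : ℝ) : sB x ^ 2 = 1 + x ^ 2 := Real.sq_sqrt (by positivity)

lemma hasDerivAt_sA (x : ℝ) : HasDerivAt sA (x / sA x) x := by
  have h : HasDerivAt (fun y : ℝ => 2 + y ^ 2) (2 * x) x := by
    simpa using ((hasDerivAt_pow 2 x).const_add 2)
  have := h.sqrt (by positivity)
  refine this.congr_deriv (Eq.symm ?_)
  rw [sA]
  field_simp

lemma hasDerivAt_sB (x : ℝ) : HasDerivAt sB (x / sB x) x := by
  have h : HasDerivAt (fun y : ℝ => 1 + y ^ 2) (2 * x) x := by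
    simpa using ((hasDerivAt_pow 2 x).const_add 1)
  have := h.sqrt (by positivity)
  refine this.congr_deriv (Eq.symm ?_)
  rw [sB]
  field_simp

lemma lam_eq : lam = fun x => x * sA x / sB x := by
  funext x
  rw [lam, sA, sB, Real.sqrt_div (by positivity), mul_div_assoc]

lemma hasDerivAt_lam (x : ℝ) : HasDerivAt lam (E1 x) x := by
  rw [lam_eq]
  have h := ((hasDerivAt_id x).mul (hasDerivAt_sA x)).div (hasDerivAt_sB x) (sB_pos x).ne'
  refine h.congr_deriv (Eq.symm ?_)
  have ha := sA_sq x; have hb := sB_sq x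
  have ha0 := (sA_pos x).ne'; have hb0 := (sB_pos x).ne'
  rw [E1]
  simp only [Pi.mul_apply, id]
  field_simp
  rw [ha, hb]; ring

lemma hasDerivAt_E1 (x : ℝ) : HasDerivAt E1 (E2 x) x := by
  have hN : HasDerivAt (fun y : ℝ => y ^ 4 + 2 * y ^ 2 + 2) (4 * x ^ 3 + 4 * x) x := by
    have := ((hasDerivAt_pow 4 x).add (((hasDerivAt_pow 2 x).const_mul 2))).add_const 2
    refine this.congr_deriv (Eq.symm ?_); ring
  have hD : HasDerivAt (fun y : ℝ => sA y * sB y * (1 + y ^ 2))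
      ((x / sA x * sB x + sA x * (x / sB x)) * (1 + x ^ 2) + sA x * sB x * (2 * x)) x := by
    have h2 : HasDerivAt (fun y : ℝ => 1 + y ^ 2) (2 * x) x := by
      simpa using ((hasDerivAt_pow 2 x).const_add 1)
    exact ((hasDerivAt_sA x).mul (hasDerivAt_sB x)).mul h2
  have hD0 : sA x * sB x * (1 + x ^ 2) ≠ 0 := by
    have := sA_pos x; have := sB_pos x; positivity
  have h := hN.div hD hD0
  have heq : ∀ y, E1 y = (y ^ 4 + 2 * y ^ 2 + 2) / (sA y * sB y * (1 + y ^ 2)) := fun y => rfl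
  refine h.congr_deriv (Eq.symm ?_)
  have ha := sA_sq x; have hb := sB_sq x
  have ha0 := (sA_pos x).ne'; have hb0 := (sB_pos x).ne'
  rw [E2]
  field_simp
  rw [ha, hb]; ring

lemma hasDerivAt_E2 (x : ℝ) : HasDerivAt E2 (E3 x) x := by
  have hN : HasDerivAt (fun y : ℝ => y ^ 5 - 2 * y ^ 3 - 6 * y)
      (5 * x ^ 4 - 6 * x ^ 2 - 6) x := by
    have := ((hasDerivAt_pow 5 x).sub ((hasDerivAt_pow 3 x).const_mul 2)).sub
      ((hasDerivAt_id x).const_mul 6)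
    refine this.congr_deriv (Eq.symm ?_); ring
  have h2 : HasDerivAt (fun y : ℝ => 2 + y ^ 2) (2 * x) x := by
    simpa using ((hasDerivAt_pow 2 x).const_add 2)
  have h1 : HasDerivAt (fun y : ℝ => (1 + y ^ 2) ^ 2) (2 * (1 + x ^ 2) * (2 * x)) x := by
    have hb : HasDerivAt (fun y : ℝ => 1 + y ^ 2) (2 * x) x := by
      simpa using ((hasDerivAt_pow 2 x).const_add 1)
    have := hb.pow 2
    refine this.congr_deriv (Eq.symm ?_); ring
  have hD : HasDerivAt (fun y : ℝ => sA y * sB y * (2 + y ^ 2) * (1 + y ^ 2) ^ 2)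
      (((x / sA x * sB x + sA x * (x / sB x)) * (2 + x ^ 2) + sA x * sB x * (2 * x)) *
          (1 + x ^ 2) ^ 2 +
        sA x * sB x * (2 + x ^ 2) * (2 * (1 + x ^ 2) * (2 * x))) x :=
    (((hasDerivAt_sA x).mul (hasDerivAt_sB x)).mul h2).mul h1
  have hD0 : sA x * sB x * (2 + x ^ 2) * (1 + x ^ 2) ^ 2 ≠ 0 := by
    have := sA_pos x; have := sB_pos x; positivity
  have h := hN.div hD hD0
  refine h.congr_deriv (Eq.symm ?_)
  have ha := sA_sq x; have hb := sB_sq x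
  have ha0 := (sA_pos x).ne'; have hb0 := (sB_pos x).ne'
  rw [E3]
  field_simp
  rw [ha, hb]; ring

lemma deriv_lam_eq : deriv lam = E1 := funext fun x => (hasDerivAt_lam x).deriv
lemma deriv_E1_eq : deriv E1 = E2 := funext fun x => (hasDerivAt_E1 x).deriv
lemma deriv_E2_eq : deriv E2 = E3 := funext fun x => (hasDerivAt_E2 x).deriv

open scoped ContDiff in
lemma lam_smooth : ContDiff ℝ ∞ lam := by
  rw [contDiff_iff_contDiffAt]
  intro x
  have hpos : (0:ℝ) < (2 + x ^ 2) / (1 + x ^ 2) := by positivity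
  have hu : ContDiffAt ℝ ∞ (fun y : ℝ => (2 + y ^ 2) / (1 + y ^ 2)) x := by
    apply ContDiffAt.div
    · exact (contDiffAt_const.add (contDiffAt_id.pow 2))
    · exact (contDiffAt_const.add (contDiffAt_id.pow 2))
    · positivity
  exact contDiffAt_id.mul ((Real.contDiffAt_sqrt hpos.ne').comp x hu)

lemma gamma0_sq : gamma0 ^ 2 = 1 + Real.sqrt 7 := by
  have h7 : (0:ℝ) ≤ Real.sqrt 7 := Real.sqrt_nonneg 7
  rw [gamma0, Real.sq_sqrt (by linarith)]

lemma E3_gamma0_ne : E3 gamma0 ≠ 0 := by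
  have h7 : Real.sqrt 7 ^ 2 = 7 := Real.sq_sqrt (by norm_num)
  have h70 : (0:ℝ) ≤ Real.sqrt 7 := Real.sqrt_nonneg 7
  have hg := gamma0_sq
  have hnum : (5 * gamma0 ^ 4 - 6 * gamma0 ^ 2 - 6) * (2 + gamma0 ^ 2) * (1 + gamma0 ^ 2)
      - (gamma0 ^ 5 - 2 * gamma0 ^ 3 - 6 * gamma0) * gamma0 * (8 * gamma0 ^ 2 + 13)
      = (28 + 4 * Real.sqrt 7) * (3 + Real.sqrt 7) * (2 + Real.sqrt 7) := by
    have h4 : gamma0 ^ 4 = 8 + 2 * Real.sqrt 7 := by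
      have : gamma0 ^ 4 = (gamma0 ^ 2) ^ 2 := by ring
      rw [this, hg]; nlinarith [h7]
    have h5 : gamma0 ^ 5 - 2 * gamma0 ^ 3 - 6 * gamma0
        = gamma0 * (gamma0 ^ 4 - 2 * gamma0 ^ 2 - 6) := by ring
    rw [h5, h4, hg]; ring
  have hpos : (0:ℝ) < (28 + 4 * Real.sqrt 7) * (3 + Real.sqrt 7) * (2 + Real.sqrt 7) := by
    positivity
  rw [E3, hnum]
  have hd : 0 < sA gamma0 * sB gamma0 * (2 + gamma0 ^ 2) ^ 2 * (1 + gamma0 ^ 2) ^ 3 := by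
    have := sA_pos gamma0; have := sB_pos gamma0; positivity
  positivity

open scoped ContDiff in
theorem stmt_11 : ∀ δ₀ : ℝ, 0 < δ₀ → ∀ pf : ℝ → ℝ,
    ContDiffOn ℝ (⊤ : ℕ∞) pf (Set.Ioo (gamma0 - δ₀) (gamma0 + δ₀)) →
    pf gamma0 = gamma0 → deriv pf gamma0 = -1 →
    (∀ x ∈ Set.Ioo (gamma0 - δ₀) (gamma0 + δ₀), deriv lam (pf x) = deriv lam x) →
    iteratedDeriv 2 pf gamma0 =
      -2 * iteratedDeriv 4 lam gamma0 / (3 * iteratedDeriv 3 lam gamma0) := by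
  intro δ₀ hδ pf hpf hfix hslope hfe
  set U := Set.Ioo (gamma0 - δ₀) (gamma0 + δ₀) with hUdef
  have hUo : IsOpen U := isOpen_Ioo
  have hγU : gamma0 ∈ U := by constructor <;> simp <;> linarith
  have hUn : U ∈ 𝓝 gamma0 := hUo.mem_nhds hγU
  -- pf derivatives
  have hpf_d : ∀ x ∈ U, HasDerivAt pf (deriv pf x) x := fun x hx =>
    ((hpf.differentiableOn (by simp)).differentiableAt (hUo.mem_nhds hx)).hasDerivAt
  have hdpf_cd : ContDiffOn ℝ ∞ (deriv pf) U := hpf.deriv_of_isOpen hUo (by simp)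
  have hdpf_d : ∀ x ∈ U, HasDerivAt (deriv pf) (deriv (deriv pf) x) x := fun x hx =>
    ((hdpf_cd.differentiableOn (by simp)).differentiableAt (hUo.mem_nhds hx)).hasDerivAt
  have hddpf_cd : ContDiffOn ℝ ∞ (deriv (deriv pf)) U := by
    refine hdpf_cd.deriv_of_isOpen hUo ?_
    exact_mod_cast le_refl _
  have hddpf_d : HasDerivAt (deriv (deriv pf)) (deriv (deriv (deriv pf)) gamma0) gamma0 :=
    ((hddpf_cd.differentiableOn (by simp)).differentiableAt hUn).hasDerivAt
  -- the functional equation chain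
  have H0 : (fun x => E1 (pf x)) =ᶠ[𝓝 gamma0] E1 := by
    filter_upwards [hUn] with x hx
    have := hfe x hx
    rwa [deriv_lam_eq] at this
  have H1 : (fun x => E2 (pf x) * deriv pf x) =ᶠ[𝓝 gamma0] E2 := by
    have h := H0.deriv
    rw [deriv_E1_eq] at h
    refine EventuallyEq.trans ?_ h
    filter_upwards [hUn] with x hx
    have := ((hasDerivAt_E1 (pf x)).comp x (hpf_d x hx)).deriv
    simpa [Function.comp_def, Pi.mul_def] using this.symm
  have hE2γ : E2 gamma0 = 0 := by
    have := H1.eq_of_nhds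
    rw [hfix, hslope] at this
    linarith
  have H2 : (fun x => E3 (pf x) * deriv pf x * deriv pf x + E2 (pf x) * deriv (deriv pf) x)
      =ᶠ[𝓝 gamma0] E3 := by
    have h := H1.deriv
    rw [deriv_E2_eq] at h
    refine EventuallyEq.trans ?_ h
    filter_upwards [hUn] with x hx
    have := (((hasDerivAt_E2 (pf x)).comp x (hpf_d x hx)).mul (hdpf_d x hx)).deriv
    simpa [Function.comp_def, Pi.mul_def] using this.symm
  -- differentiate H2 at gamma0
  set L4 := deriv E3 gamma0 with hL4
  have hE3diff : DifferentiableAt ℝ E3 gamma0 := by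
    have h3 : deriv^[3] lam = E3 := by
      show deriv (deriv (deriv lam)) = E3
      rw [deriv_lam_eq, deriv_E1_eq, deriv_E2_eq]
    have := (lam_smooth.iterate_deriv 3).differentiable (by simp)
    rw [h3] at this
    exact this.differentiableAt
  have hE3γ : HasDerivAt E3 L4 gamma0 := hE3diff.hasDerivAt
  have hE3pf : HasDerivAt (fun x => E3 (pf x)) (L4 * deriv pf gamma0) gamma0 := by
    have h := hE3γ
    rw [← hfix] at h
    simpa [Function.comp_def] using h.comp gamma0 (hpf_d gamma0 hγU)
  have hE2pf : HasDerivAt (fun x => E2 (pf x)) (E3 gamma0 * deriv pf gamma0) gamma0 := by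
    have h := hasDerivAt_E2 gamma0
    rw [← hfix] at h
    simpa [Function.comp_def, hfix] using h.comp gamma0 (hpf_d gamma0 hγU)
  set c := deriv (deriv pf) gamma0 with hc
  have hLHS : HasDerivAt
      (fun x => E3 (pf x) * deriv pf x * deriv pf x + E2 (pf x) * deriv (deriv pf) x)
      (((L4 * deriv pf gamma0) * deriv pf gamma0 + E3 (pf gamma0) * c) * deriv pf gamma0
        + (E3 (pf gamma0) * deriv pf gamma0) * c
        + ((E3 gamma0 * deriv pf gamma0) * c
          + E2 (pf gamma0) * deriv (deriv (deriv pf)) gamma0)) gamma0 := by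
    exact ((hE3pf.mul (hdpf_d gamma0 hγU)).mul (hdpf_d gamma0 hγU)).add
      (hE2pf.mul hddpf_d)
  have hkey : ((L4 * deriv pf gamma0) * deriv pf gamma0 + E3 (pf gamma0) * c) * deriv pf gamma0
        + (E3 (pf gamma0) * deriv pf gamma0) * c
        + ((E3 gamma0 * deriv pf gamma0) * c
          + E2 (pf gamma0) * deriv (deriv (deriv pf)) gamma0) = L4 := by
    rw [← hLHS.deriv]
    exact H2.deriv_eq
  rw [hfix, hslope, hE2γ] at hkey
  -- hkey : (L4 - E3 gamma0 * c) * (-1) + ... = L4  →  -3 E3γ c = 2 L4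
  have hE3ne := E3_gamma0_ne
  have hiter2 : iteratedDeriv 2 pf gamma0 = c := by
    simp [iteratedDeriv_succ, iteratedDeriv_zero, hc]
  have hiter3 : iteratedDeriv 3 lam gamma0 = E3 gamma0 := by
    simp [iteratedDeriv_succ, iteratedDeriv_zero, deriv_lam_eq, deriv_E1_eq, deriv_E2_eq]
  have hiter4 : iteratedDeriv 4 lam gamma0 = L4 := by
    simp [iteratedDeriv_succ, iteratedDeriv_zero, deriv_lam_eq, deriv_E1_eq, deriv_E2_eq, hL4]
  rw [hiter2, hiter3, hiter4]
  field_simp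
  nlinarith [hkey]
end
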